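/- arXiv:2405.02699 — 6 statements merged into one kernel-verified Lean document; each statement's English description precedes it below -/
import Mathlib

section
/- For any polynomial v(q) = \sum_{i\ge 1} \alpha_i q^i with all \alpha_i \ge 0 and no constant term, we have 4 v'(1/2) \cdot \int_0^{1/2} v(q) dq \ge (v(1/2))^2. -/
open Polynomial intervalIntegral

theorem stmt0 (v : Polynomial ℝ) (hnn : ∀ i, 0 ≤ v.coeff i) (h0 : v.coeff 0 = 0) :
    4 * (v.derivative.eval (1/2)) * (∫ q in (0:ℝ)..(1/2), v.eval q) ≥ (v.eval (1/2))^2 := by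
  set n := v.natDegree with hn
  set a : ℕ → ℝ := fun i => v.coeff i with ha
  set s := Finset.range (n+1) with hs
  -- formulas
  have heval : v.eval (1/2 : ℝ) = ∑ i ∈ s, a i * (1/2)^i := by
    rw [eval_eq_sum_range]
  have hderiv : v.derivative.eval (1/2 : ℝ) = ∑ i ∈ s, a i * i * (1/2)^(i-1) := by
    rw [Polynomial.derivative_eval, Polynomial.sum_over_range]
    intro m; simp
  have hint : (∫ q in (0:ℝ)..(1/2), v.eval q) = ∑ i ∈ s, a i * (1/2)^(i+1) / (i+1) := by
    have : ∀ q : ℝ, v.eval q = ∑ i ∈ s, a i * q^i := fun q => eval_eq_sum_range q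
    rw [intervalIntegral.integral_congr (g := fun q => ∑ i ∈ s, a i * q^i)
      (fun q _ => this q)]
    rw [intervalIntegral.integral_finset_sum]
    · refine Finset.sum_congr rfl fun i _ => ?_
      rw [intervalIntegral.integral_const_mul, integral_pow]
      simp [mul_div_assoc]
    · intro i _
      exact (continuous_const.mul (continuous_pow i)).intervalIntegrable _ _
  rw [heval, hderiv, hint]
  set b : ℕ → ℝ := fun i => a i * i * (1/2)^(i-1) with hb
  set c : ℕ → ℝ := fun i => a i * (1/2)^(i+1) / (i+1) with hc
  set d : ℕ → ℝ := fun i => a i * (1/2)^i with hd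
  have hbnn : ∀ i, 0 ≤ b i := fun i => by
    have := hnn i; simp only [hb, ha]; positivity
  have hcnn : ∀ i, 0 ≤ c i := fun i => by
    have := hnn i; simp only [hc, ha]; positivity
  have hdnn : ∀ i, 0 ≤ d i := fun i => by
    have := hnn i; simp only [hd, ha]; positivity
  have key : ∀ i, d i ^ 2 ≤ b i * (4 * c i) := by
    intro i
    match i with
    | 0 => simp [hd, hb, ha, h0]
    | j+1 =>
      have hj1 : (0:ℝ) < (j:ℝ) + 1 := by positivity
      have hi1 : (0:ℝ) < (j:ℝ) + 1 + 1 := by positivity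
      have hkey : b (j+1) * (4 * c (j+1)) =
          a (j+1) ^ 2 * ((1/2:ℝ)^(j+1))^2 * (4 * ((j:ℝ)+1) / (((j:ℝ)+1)+1)) := by
        simp only [hb, hc, Nat.add_sub_cancel, pow_succ, Nat.cast_add, Nat.cast_one]
        field_simp
      rw [hkey, hd]
      have h3 : (1:ℝ) ≤ 4 * ((j:ℝ)+1) / (((j:ℝ)+1)+1) := by
        rw [le_div_iff₀ hi1]; linarith
      have hsq : (0:ℝ) ≤ a (j+1) ^ 2 * ((1/2:ℝ)^(j+1))^2 := by positivity
      calc (a (j+1) * (1/2)^(j+1))^2 = a (j+1) ^ 2 * ((1/2:ℝ)^(j+1))^2 * 1 := by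
            push_cast; ring
        _ ≤ _ := by
            apply mul_le_mul_of_nonneg_left h3 hsq
  have step1 : (∑ i ∈ s, d i)^2 ≤ (∑ i ∈ s, Real.sqrt (b i) * Real.sqrt (4 * c i))^2 := by
    apply pow_le_pow_left₀ (Finset.sum_nonneg fun i _ => hdnn i)
    apply Finset.sum_le_sum
    intro i _
    rw [← Real.sqrt_mul (hbnn i)]
    rw [show d i = Real.sqrt (d i ^ 2) from (Real.sqrt_sq (hdnn i)).symm]
    exact Real.sqrt_le_sqrt (key i)
  have step2 : (∑ i ∈ s, Real.sqrt (b i) * Real.sqrt (4 * c i))^2 ≤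
      (∑ i ∈ s, Real.sqrt (b i)^2) * ∑ i ∈ s, Real.sqrt (4 * c i)^2 :=
    Finset.sum_mul_sq_le_sq_mul_sq s _ _
  have step3 : (∑ i ∈ s, Real.sqrt (b i)^2) * (∑ i ∈ s, Real.sqrt (4 * c i)^2) =
      4 * (∑ i ∈ s, b i) * (∑ i ∈ s, c i) := by
    have e1 : ∀ i ∈ s, Real.sqrt (b i)^2 = b i := fun i _ => Real.sq_sqrt (hbnn i)
    have e2 : ∀ i ∈ s, Real.sqrt (4 * c i)^2 = 4 * c i := fun i _ =>
      Real.sq_sqrt (by have := hcnn i; positivity)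
    rw [Finset.sum_congr rfl e1, Finset.sum_congr rfl e2, ← Finset.mul_sum]
    ring
  calc (∑ i ∈ s, d i)^2 ≤ _ := step1
    _ ≤ _ := step2
    _ = _ := step3
end

section
/- For all real \alpha > 0, the quantity Q(\alpha) = 2\alpha/(\alpha+1) + 1/(2^{\alpha+1} - 1) satisfies Q(\alpha) > 1. -/
theorem stmt1 (α : ℝ) (hα : 0 < α) :
    2*α/(α+1) + 1/((2:ℝ)^(α+1) - 1) > 1 := by
  have hα1 : (0:ℝ) < α + 1 := by linarith
  have hD : (0:ℝ) < (2:ℝ)^(α+1) - 1 := by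
    have : (1:ℝ) < (2:ℝ)^(α+1) := by
      apply Real.one_lt_rpow_iff_of_pos (by norm_num) |>.mpr
      left; exact ⟨by norm_num, hα1⟩
    linarith
  rcases le_or_gt 1 α with h1 | h1
  · have h2 : (1:ℝ) ≤ 2*α/(α+1) := by
      rw [le_div_iff₀ hα1]; linarith
    have h3 : (0:ℝ) < 1/((2:ℝ)^(α+1) - 1) := by positivity
    linarith
  · -- α < 1 case
    have hlog : Real.log 2 < 1 := by
      have := Real.log_two_lt_d9; linarith
    have hexp1 : Real.exp (α * Real.log 2) < Real.exp α := by
      apply Real.exp_lt_exp.mpr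
      nlinarith [Real.log_pos (by norm_num : (1:ℝ) < 2)]
    have hexp2 : (1 - α) * Real.exp α < 1 := by
      have h := Real.add_one_lt_exp (x := -α) (by linarith)
      rw [Real.exp_neg] at h
      have hp : 0 < Real.exp α := Real.exp_pos α
      rw [lt_inv_comm₀ (by linarith) hp] at h
      calc (1 - α) * Real.exp α < (Real.exp α)⁻¹ * Real.exp α := by
            apply mul_lt_mul_of_pos_right _ hp
            linarith [Real.add_one_lt_exp (x := -α) (by linarith : (-α:ℝ) ≠ 0),
              Real.exp_neg α]
        _ = 1 := inv_mul_cancel₀ (ne_of_gt hp)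
    have hkey : (2:ℝ)^(α+1) * (1 - α) < 2 := by
      have e1 : (2:ℝ)^(α+1) = 2 * Real.exp (α * Real.log 2) := by
        rw [Real.rpow_add (by norm_num : (0:ℝ) < 2), Real.rpow_one,
          Real.rpow_def_of_pos (by norm_num : (0:ℝ) < 2), mul_comm (Real.log 2)]
        ring
      rw [e1]
      nlinarith [Real.exp_pos (α * Real.log 2), Real.exp_pos α]
    rw [gt_iff_lt, ← sub_pos]
    have heq : 2*α/(α+1) + 1/((2:ℝ)^(α+1) - 1) - 1
        = ((α+1) - (1-α)*((2:ℝ)^(α+1) - 1)) / ((α+1) * ((2:ℝ)^(α+1) - 1)) := by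
      field_simp
      ring
    rw [heq]
    apply div_pos _ (mul_pos hα1 hD)
    nlinarith [hkey]
end

section
/- Let H > 0, L > 0, \gamma \in (0,1), \mathcal{E} > 0 and Q = \mathcal{E} L/H. Let \mu^F = 1/(Q\gamma + 1 - \gamma), \mu^S = \mathcal{E}\mu^F, \tilde\mu^F = 1/(Q(1-\gamma) + \gamma), and define a = 2\gamma H, b = 2\tilde\mu^F \gamma H, c = 2\mu^S \gamma L. Then Q < 1 \iff b > a \iff a > c. -/
/-! Both conditions reduce to `Q < 1` because each revenue ratio compares `1` with a convex
combination of `Q` and `1`: `b / a = 1 / (Q (1 - γ) + γ)` and `c / a = Q / (Q γ + 1 - γ)`. -/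

namespace MirroredDuopoly

variable {Q t : ℝ}

lemma mix_pos (hQ : 0 ≤ Q) (ht : t ∈ Set.Ioo (0 : ℝ) 1) : 0 < Q * (1 - t) + t := by
  nlinarith [ht.1, ht.2]

lemma one_lt_one_div_mix_iff (hQ : 0 ≤ Q) (ht : t ∈ Set.Ioo (0 : ℝ) 1) :
    1 < 1 / (Q * (1 - t) + t) ↔ Q < 1 := by
  rw [one_lt_div (mix_pos hQ ht)]
  constructor <;> intro h <;> nlinarith [ht.1, ht.2]

lemma div_mix_lt_one_iff (hQ : 0 ≤ Q) (ht : t ∈ Set.Ioo (0 : ℝ) 1) :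
    Q / (Q * t + 1 - t) < 1 ↔ Q < 1 := by
  have hpos : 0 < Q * t + 1 - t := by nlinarith [ht.1, ht.2]
  rw [div_lt_one hpos]
  constructor <;> intro h <;> nlinarith [ht.1, ht.2]

end MirroredDuopoly

open MirroredDuopoly in
theorem stmt8 (H L γ E : ℝ) (hH : 0 < H) (hL : 0 < L) (hγ : γ ∈ Set.Ioo (0:ℝ) 1)
    (hE : 0 < E) (Q μF μS tμF a b c : ℝ)
    (hQ : Q = E * L / H)
    (hμF : μF = 1/(Q*γ + 1 - γ)) (hμS : μS = E * μF)
    (htμF : tμF = 1/(Q*(1-γ) + γ))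
    (ha : a = 2*γ*H) (hb : b = 2*tμF*γ*H) (hc : c = 2*μS*γ*L) :
    (Q < 1 ↔ b > a) ∧ (b > a ↔ a > c) := by
  have hQ0 : 0 ≤ Q := by rw [hQ]; positivity
  have ha0 : 0 < a := by rw [ha]; nlinarith [hγ.1]
  have hba : b = tμF * a := by rw [hb, ha]; ring
  have hca : c = Q / (Q * γ + 1 - γ) * a := by
    rw [hc, hμS, hμF, ha, hQ]; field_simp
  have hb_iff : Q < 1 ↔ b > a := by
    rw [gt_iff_lt, hba, lt_mul_iff_one_lt_left ha0, htμF, one_lt_one_div_mix_iff hQ0 hγ]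
  have hc_iff : Q < 1 ↔ a > c := by
    rw [gt_iff_lt, hca, mul_lt_iff_lt_one_left ha0, div_mix_lt_one_iff hQ0 hγ]
  exact ⟨hb_iff, hb_iff.symm.trans hc_iff⟩
end

section
/- For valuations v_1(q) = \alpha q and v_2(q) = 1 on [0,1] with \alpha \in (2,4), the system \mu_2 = \mu_1 \alpha q_S, \mu_2 (1-q_S) = \alpha(1-q_S^2)/2, and q_S = \mu_1 \alpha q_S^2 / 2 with q_S \in (0,1) and \mu_1, \mu_2 > 0 has the unique solution \mu_2 = 2, q_S = 4/\alpha - 1, \mu_1 = 2/(4-\alpha). -/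
theorem stmt10 (α : ℝ) (hα : α ∈ Set.Ioo (2:ℝ) 4) :
    ∀ μ1 μ2 qS : ℝ, 0 < μ1 → 0 < μ2 → qS ∈ Set.Ioo (0:ℝ) 1 →
      ((μ2 = μ1 * α * qS ∧ μ2 * (1 - qS) = α * (1 - qS^2) / 2 ∧
        qS = μ1 * α * qS^2 / 2) ↔
        (μ2 = 2 ∧ qS = 4/α - 1 ∧ μ1 = 2/(4-α))) := by
  obtain ⟨hα2, hα4⟩ := hα
  intro μ1 μ2 qS hμ1 hμ2 hq
  obtain ⟨hq0, hq1⟩ := hq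
  have hαpos : (0:ℝ) < α := by linarith
  constructor
  · rintro ⟨h1, h2, h3⟩
    -- from h3: μ1 * α * qS = 2
    have key : μ1 * α * qS = 2 := by
      have hq0' : qS ≠ 0 := ne_of_gt hq0
      field_simp at h3
      nlinarith [sq_nonneg qS]
    have hμ2eq : μ2 = 2 := by rw [h1]; exact key
    -- μ2 = α(1+qS)/2
    have hμ2' : α * (1 + qS) = 4 := by nlinarith
    have hqeq : qS = 4/α - 1 := by field_simp; linarith
    refine ⟨hμ2eq, hqeq, ?_⟩
    have h4α : (4:ℝ) - α ≠ 0 := by linarith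
    have : α * qS = 4 - α := by nlinarith
    field_simp
    nlinarith
  · rintro ⟨h1, h2, h3⟩
    subst h1 h2 h3
    have h4α : (4:ℝ) - α ≠ 0 := by linarith
    have hα0 : α ≠ 0 := ne_of_gt hαpos
    refine ⟨?_, ?_, ?_⟩ <;> field_simp <;> ring
end

section
/- Define F_1(t) = (2 - (8t^3/(3-t^2))^2 - t^2) / (1 - t^2 + 8t - 8t \cdot 8t^3/(3-t^2)) - 1/(1+t^2). Then F_1(t) < 0 for all t \in (0.36, 0.609). -/
theorem stmt18 (t : ℝ) (ht : t ∈ Set.Ioo (0.36 : ℝ) 0.609) :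
    (2 - (8*t^3/(3 - t^2))^2 - t^2) / (1 - t^2 + 8*t - 8*t*(8*t^3/(3 - t^2)))
      - 1/(1 + t^2) < 0 := by
  obtain ⟨h1, h2⟩ := ht
  norm_num at h1 h2
  have h3 : (0:ℝ) < 3 - t^2 := by nlinarith
  have hp1 : (0:ℝ) < 1 + t^2 := by positivity
  set u := 8*t^3/(3 - t^2) with hudef
  have hu : u * (3 - t^2) = 8*t^3 := by
    rw [hudef, div_mul_cancel₀ _ h3.ne']
  have hu2 : u * (3 - t^2)^2 = 8*t^3*(3 - t^2) := by
    rw [sq, ← mul_assoc, hu]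
  have husq : u^2 * (3 - t^2)^2 = 64*t^6 := by
    rw [← mul_pow, hu]; ring
  have hX : (0:ℝ) < (1 - t^2 + 8*t)*(3 - t^2) - 64*t^4 := by
    nlinarith [mul_pos (sub_pos.mpr h1) (sub_pos.mpr h2), sq_nonneg (t^2 - 1/4), sq_nonneg t, sq_nonneg (t-1/2)]
  have hD : (0:ℝ) < 1 - t^2 + 8*t - 8*t*u := by
    nlinarith [hu, hX, h3]
  rw [sub_neg, div_lt_div_iff₀ hD hp1]
  nlinarith [hu2, husq, mul_pos h3 h3, mul_pos (mul_pos h3 h3) h3,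
    mul_pos (sub_pos.mpr h1) (sub_pos.mpr h2), sq_nonneg (t - 1/2),
    mul_pos (mul_pos (sub_pos.mpr h1) (sub_pos.mpr h2)) (mul_pos h3 h3),
    sq_nonneg t, sq_nonneg (t^2 - 1/4)]
end

section
/- Define u(t) = 8t^3/(3-t^2), w(t) = (2 - u(t)^2 - t^2)/(1 - t^2 + 8t - 8t\,u(t)), and F_2(t) = 4 w(t) t (1 - u(t)/2) - 5/8. Then F_2(t) > 0 for all t \in (0.36, 0.609). -/
/-!
Clearing the denominators of `u` and `w` turns `F₂` into a rational function
`N / (8 (3 - t²)² D)` with `D` of degree 4 and `N` of degree 10. Both polynomials are positive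
on `[1/4, 2/3]`, an interval containing `(0.36, 0.609)`: a positivity certificate is a
combination of powers of the nonnegative factor `(t - 1/4)(2/3 - t)`.
-/

namespace ExponentialValuationAuction

noncomputable def u (t : ℝ) : ℝ := 8 * t ^ 3 / (3 - t ^ 2)

noncomputable def w (t : ℝ) : ℝ :=
  (2 - u t ^ 2 - t ^ 2) / (1 - t ^ 2 + 8 * t - 8 * t * u t)

noncomputable def F₂ (t : ℝ) : ℝ := 4 * w t * t * (1 - u t / 2) - 5 / 8

def denominator (t : ℝ) : ℝ := 3 + 24 * t - 4 * t ^ 2 - 8 * t ^ 3 - 63 * t ^ 4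

def numerator (t : ℝ) : ℝ :=
  -135 + 648 * t + 270 * t ^ 2 - 1512 * t ^ 3 + 396 * t ^ 4 + 1080 * t ^ 5 + 818 * t ^ 6
    - 6456 * t ^ 7 - 709 * t ^ 8 + 2080 * t ^ 9 + 8320 * t ^ 10

variable {t : ℝ}

lemma w_denominator_eq (h3 : 3 - t ^ 2 ≠ 0) :
    1 - t ^ 2 + 8 * t - 8 * t * u t = denominator t / (3 - t ^ 2) := by
  rw [u, denominator]
  field_simp
  ring

lemma F₂_eq_div (h3 : 3 - t ^ 2 ≠ 0) (hD : denominator t ≠ 0) :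
    F₂ t = numerator t / (8 * (3 - t ^ 2) ^ 2 * denominator t) := by
  rw [F₂, w, w_denominator_eq h3, u]
  field_simp
  rw [numerator, denominator]
  ring

lemma denominator_pos (h0 : 0 ≤ t) (h1 : t ≤ 2 / 3) : 0 < denominator t := by
  rw [denominator]
  nlinarith [pow_le_pow_left₀ h0 h1 3, pow_le_pow_left₀ h0 h1 4]

lemma numerator_pos (h0 : 1 / 4 ≤ t) (h1 : t ≤ 2 / 3) : 0 < numerator t := by
  have hp : 0 ≤ t - 1 / 4 := by linarith
  have hq : 0 ≤ 2 / 3 - t := by linarith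
  have hpq : 0 ≤ (t - 1 / 4) * (2 / 3 - t) := mul_nonneg hp hq
  rw [numerator]
  nlinarith [pow_nonneg hpq 2, pow_nonneg hpq 3, pow_nonneg hpq 4, pow_nonneg hpq 5,
    mul_nonneg hpq hp, mul_nonneg hpq hq]

lemma F₂_pos (h0 : 1 / 4 ≤ t) (h1 : t ≤ 2 / 3) : 0 < F₂ t := by
  have h3 : 0 < 3 - t ^ 2 := by nlinarith
  have hD := denominator_pos (by linarith) h1
  rw [F₂_eq_div h3.ne' hD.ne']
  exact div_pos (numerator_pos h0 h1) (by positivity)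

end ExponentialValuationAuction

open ExponentialValuationAuction in
theorem stmt19 (t : ℝ) (ht : t ∈ Set.Ioo (0.36 : ℝ) 0.609) :
    4 * ((2 - (8*t^3/(3 - t^2))^2 - t^2) / (1 - t^2 + 8*t - 8*t*(8*t^3/(3 - t^2))))
      * t * (1 - (8*t^3/(3 - t^2))/2) - 5/8 > 0 := by
  obtain ⟨h0, h1⟩ := ht
  norm_num at h0 h1
  exact F₂_pos (t := t) (by linarith) (by linarith)
end
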